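/- Consider the normalized single-channel scalar 2-D SSM recurrence, in which the state update is scaled by 1/2: k^h(i,j) = 0.5·(A1·k^h(i,j−1) + A2·k^v(i,j−1)) + B1·δ(i,j) and k^v(i,j) = 0.5·(A3·k^h(i−1,j) + A4·k^v(i−1,j)) + B2·δ(i,j), where δ(0,0) = 1 and δ(i,j) = 0 otherwise, and states with a negative index are 0. If 0 ≤ A1, A2, A3, A4 ≤ 1 and 0 ≤ B1, B2 ≤ 1, then the impulse-response kernels remain bounded: 0 ≤ k^h(i,j) ≤ 1 and 0 ≤ k^v(i,j) ≤ 1 for all i, j ∈ ℕ. -/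
import Mathlib


/-- The pair of (horizontal, vertical) states of the *normalized* single-channel
scalar 2-D SSM, in which the state update is scaled by `1/2`. -/
noncomputable def ssmStateNorm (A1 A2 A3 A4 B1 B2 : ℝ) (u : ℕ → ℕ → ℝ) : ℕ → ℕ → ℝ × ℝ
  | 0, 0 => (B1 * u 0 0, B2 * u 0 0)
  | 0, j + 1 =>
      (0.5 * (A1 * (ssmStateNorm A1 A2 A3 A4 B1 B2 u 0 j).1
         + A2 * (ssmStateNorm A1 A2 A3 A4 B1 B2 u 0 j).2) + B1 * u 0 (j + 1),
       B2 * u 0 (j + 1))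
  | i + 1, 0 =>
      (B1 * u (i + 1) 0,
       0.5 * (A3 * (ssmStateNorm A1 A2 A3 A4 B1 B2 u i 0).1
         + A4 * (ssmStateNorm A1 A2 A3 A4 B1 B2 u i 0).2) + B2 * u (i + 1) 0)
  | i + 1, j + 1 =>
      (0.5 * (A1 * (ssmStateNorm A1 A2 A3 A4 B1 B2 u (i + 1) j).1
         + A2 * (ssmStateNorm A1 A2 A3 A4 B1 B2 u (i + 1) j).2) + B1 * u (i + 1) (j + 1),
       0.5 * (A3 * (ssmStateNorm A1 A2 A3 A4 B1 B2 u i (j + 1)).1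
         + A4 * (ssmStateNorm A1 A2 A3 A4 B1 B2 u i (j + 1)).2) + B2 * u (i + 1) (j + 1))
  termination_by i j => (i, j)

/-- The impulse input. -/
noncomputable def impulse : ℕ → ℕ → ℝ := fun i j => if i = 0 ∧ j = 0 then 1 else 0

/-- If all the parameters of the normalized 2-D SSM lie in `[0,1]`, then the
impulse-response kernels `k^h, k^v` remain bounded in `[0,1]`. -/
theorem ssm_normalized_kernel_bounded
    (A1 A2 A3 A4 B1 B2 : ℝ)
    (hA1 : A1 ∈ Set.Icc (0 : ℝ) 1) (hA2 : A2 ∈ Set.Icc (0 : ℝ) 1)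
    (hA3 : A3 ∈ Set.Icc (0 : ℝ) 1) (hA4 : A4 ∈ Set.Icc (0 : ℝ) 1)
    (hB1 : B1 ∈ Set.Icc (0 : ℝ) 1) (hB2 : B2 ∈ Set.Icc (0 : ℝ) 1) (i j : ℕ) :
    (ssmStateNorm A1 A2 A3 A4 B1 B2 impulse i j).1 ∈ Set.Icc (0 : ℝ) 1 ∧
    (ssmStateNorm A1 A2 A3 A4 B1 B2 impulse i j).2 ∈ Set.Icc (0 : ℝ) 1 := by
  obtain ⟨ha1, ha1'⟩ := hA1
  obtain ⟨ha2, ha2'⟩ := hA2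
  obtain ⟨ha3, ha3'⟩ := hA3
  obtain ⟨ha4, ha4'⟩ := hA4
  obtain ⟨hb1, hb1'⟩ := hB1
  obtain ⟨hb2, hb2'⟩ := hB2
  have key : ∀ n : ℕ, ∀ i j : ℕ, i + j = n →
      (ssmStateNorm A1 A2 A3 A4 B1 B2 impulse i j).1 ∈ Set.Icc (0 : ℝ) 1 ∧
      (ssmStateNorm A1 A2 A3 A4 B1 B2 impulse i j).2 ∈ Set.Icc (0 : ℝ) 1 := by
    intro n
    induction n using Nat.strong_induction_on with
    | _ n ih =>
      intro i j hij
      match i, j with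
      | 0, 0 =>
        simp only [ssmStateNorm, impulse]
        norm_num
        repeat' constructor
        all_goals nlinarith
      | 0, j + 1 =>
        obtain ⟨⟨h1, h2⟩, ⟨h3, h4⟩⟩ := ih j (by omega) 0 j (by omega)
        simp only [ssmStateNorm, impulse]
        norm_num
        repeat' constructor
        all_goals nlinarith
      | i + 1, 0 =>
        obtain ⟨⟨h1, h2⟩, ⟨h3, h4⟩⟩ := ih i (by omega) i 0 (by omega)
        simp only [ssmStateNorm, impulse]
        norm_num
        repeat' constructor
        all_goals nlinarith
      | i + 1, j + 1 =>
        obtain ⟨⟨h1, h2⟩, ⟨h3, h4⟩⟩ := ih (i + 1 + j) (by omega) (i + 1) j (by omega)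
        obtain ⟨⟨h5, h6⟩, ⟨h7, h8⟩⟩ := ih (i + (j + 1)) (by omega) i (j + 1) (by omega)
        simp only [ssmStateNorm, impulse]
        norm_num
        repeat' constructor
        all_goals nlinarith
  exact key (i + j) i j rfl
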